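/- arXiv:2511.21294 — 4 statements merged into one kernel-verified Lean document; each statement's English description precedes it below -/
import Mathlib

section
/- Let k ∈ ℤ \ {0}, ξ, η ∈ ℝ, ν ∈ (0,1], β₀ > 2, and p(t) = k² + (ξ − kt)² + η². If |t − ξ/k| ≥ β₀ ν^{−1/3} and β₀²(β₀² − 1) ≥ 8, then ∂ₜp(t)/p(t) ≤ (1/4) ν p(t). -/
/-- Away from the critical layer, the stretching term is dominated by dissipation:
if `|t − ξ/k| ≥ β₀ ν^{−1/3}` and `β₀²(β₀² − 1) ≥ 8`, then
`∂ₜp(t)/p(t) ≤ (1/4) ν p(t)` where `p(t) = k² + (ξ − kt)² + η²` and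
`∂ₜp(t) = −2k(ξ − kt)`. -/
theorem stretching_dominated_by_dissipation
    (k : ℤ) (hk : k ≠ 0) (ξ η ν β₀ t : ℝ)
    (hν : 0 < ν) (hν1 : ν ≤ 1) (hβ₀ : 2 < β₀)
    (h8 : 8 ≤ β₀ ^ 2 * (β₀ ^ 2 - 1))
    (hfar : β₀ * ν ^ (-(1 : ℝ) / 3) ≤ |t - ξ / (k : ℝ)|) :
    (-2 * (k : ℝ) * (ξ - k * t)) / ((k : ℝ) ^ 2 + (ξ - k * t) ^ 2 + η ^ 2) ≤
      (1 / 4) * ν * ((k : ℝ) ^ 2 + (ξ - k * t) ^ 2 + η ^ 2) := by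
  have hk0 : (k : ℝ) ≠ 0 := by exact_mod_cast hk
  have hK1 : (1 : ℝ) ≤ |(k : ℝ)| := by
    have := Int.one_le_abs hk
    calc (1:ℝ) ≤ ((|k| : ℤ) : ℝ) := by exact_mod_cast this
    _ = |(k:ℝ)| := by push_cast; ring
  obtain ⟨a, ha⟩ : ∃ x : ℝ, x = ξ - (k:ℝ) * t := ⟨_, rfl⟩
  rw [← ha]
  have hb : (0:ℝ) < ν ^ (-(1:ℝ)/3) := Real.rpow_pos_of_pos hν _
  have hβ0 : (0:ℝ) < β₀ := by linarith
  have haeq : |a| = |(k:ℝ)| * |t - ξ / k| := by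
    have h : a = (k:ℝ) * (ξ / k - t) := by rw [ha]; field_simp
    rw [h, abs_mul, abs_sub_comm (ξ / (k:ℝ)) t]
  have hab : |(k:ℝ)| * (β₀ * ν ^ (-(1:ℝ)/3)) ≤ |a| := by
    rw [haeq]
    exact mul_le_mul_of_nonneg_left hfar (abs_nonneg _)
  have hcube3 : (ν ^ (-(1:ℝ)/3)) ^ (3:ℕ) = 1 / ν := by
    rw [← Real.rpow_natCast (ν ^ (-(1:ℝ)/3)) 3, ← Real.rpow_mul hν.le]
    norm_num [Real.rpow_neg_one]
  have habs3 : (|(k:ℝ)| * (β₀ * ν ^ (-(1:ℝ)/3))) ^ (3:ℕ) ≤ |a| ^ (3:ℕ) := by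
    apply pow_le_pow_left₀ (by positivity) hab
  have hcube : 8 * |(k:ℝ)| ≤ ν * |a| ^ 3 := by
    have h1 : |(k:ℝ)|^3 * β₀^3 * (1/ν) ≤ |a|^3 := by
      calc |(k:ℝ)|^3 * β₀^3 * (1/ν)
          = (|(k:ℝ)| * (β₀ * ν ^ (-(1:ℝ)/3))) ^ (3:ℕ) := by
            rw [mul_pow, mul_pow, hcube3]; ring
        _ ≤ |a| ^ (3:ℕ) := habs3
    have h2 : ν * (|(k:ℝ)|^3 * β₀^3 * (1/ν)) ≤ ν * |a|^3 :=
      mul_le_mul_of_nonneg_left h1 hν.le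
    have h3 : ν * (|(k:ℝ)|^3 * β₀^3 * (1/ν)) = |(k:ℝ)|^3 * β₀^3 := by
      field_simp
    have h4 : 8 * |(k:ℝ)| ≤ |(k:ℝ)|^3 * β₀^3 := by
      have hβ3 : (8:ℝ) ≤ β₀^3 := by nlinarith
      have hk3 : |(k:ℝ)| ≤ |(k:ℝ)|^3 := le_self_pow₀ hK1 (by norm_num)
      calc 8 * |(k:ℝ)| ≤ β₀^3 * |(k:ℝ)| := by nlinarith [abs_nonneg (k:ℝ)]
        _ ≤ β₀^3 * |(k:ℝ)|^3 := by nlinarith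
        _ = |(k:ℝ)|^3 * β₀^3 := by ring
    linarith [h3 ▸ h2]
  have hp : (0:ℝ) < (k : ℝ) ^ 2 + a ^ 2 + η ^ 2 := by
    have : (1:ℝ) ≤ (k:ℝ)^2 := by nlinarith [sq_abs (k:ℝ)]
    nlinarith [sq_nonneg a, sq_nonneg η]
  rw [div_le_iff₀ hp]
  have key : -2 * (k:ℝ) * a ≤ (1/4) * ν * a^4 := by
    have h1 : -2 * (k:ℝ) * a ≤ 2 * |(k:ℝ)| * |a| := by
      calc -2 * (k:ℝ) * a ≤ |(-2) * (k:ℝ) * a| := le_abs_self _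
        _ = 2 * |(k:ℝ)| * |a| := by rw [abs_mul, abs_mul]; norm_num
    have h2 : 8 * |(k:ℝ)| * |a| ≤ ν * |a|^3 * |a| :=
      mul_le_mul_of_nonneg_right hcube (abs_nonneg a)
    have h3 : ν * |a|^3 * |a| = ν * a^4 := by
      rw [mul_assoc, ← pow_succ, pow_abs, abs_of_nonneg (by positivity : (0:ℝ) ≤ a^4)]
    nlinarith [h1, h2, h3]
  have hpa : a^4 ≤ ((k:ℝ)^2 + a^2 + η^2)^2 := by
    nlinarith [sq_nonneg ((k:ℝ)^2 + η^2), sq_nonneg a, sq_nonneg (k:ℝ), sq_nonneg η]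
  calc -2 * (k:ℝ) * a ≤ (1/4) * ν * a^4 := key
    _ ≤ (1/4) * ν * (((k:ℝ)^2 + a^2 + η^2)^2) :=
        mul_le_mul_of_nonneg_left hpa (by positivity)
    _ = 1/4 * ν * ((k:ℝ)^2 + a^2 + η^2) * ((k:ℝ)^2 + a^2 + η^2) := by ring
end

section
/- Let k ∈ ℤ \ {0}, ξ, η ∈ ℝ, ν ∈ (0,1], β₀ > 2, and let φ(t,k,ξ,η) be the multiplier from the previous context. Then for all t ≥ 0, ⟨t⟩^{−2} φ(t,k,ξ,η) ≤ 3, where ⟨t⟩ = √(1+t²). -/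
/-!
Off `[ξ/k, ξ/k + β₀ν^{-1/3}]` the multiplier `φ` is constant, and on that interval the ODE says
`(φ/p)' = 0`. Hence `φ(t) = p(π t) / p(π 0)`, where `π` is the projection onto the interval.
Writing `ξ - k s = (ξ - k s₀) - k (s - s₀)` gives `p(s) ≤ 2 (1 + (s - s₀)²) p(s₀)`, and since
`π` is a contraction, `φ(t) ≤ 2 (1 + t²)`.
-/

open Set

section ConstantPieces

variable {a b : ℝ}

theorem eq_of_hasDerivAt_zero_Ioo {f : ℝ → ℝ} (hab : a ≤ b) (hf : ContinuousOn f (Icc a b))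
    (hd : ∀ x ∈ Ioo a b, HasDerivAt f 0 x) : f a = f b := by
  rcases hab.eq_or_lt with rfl | hlt
  · rfl
  obtain ⟨c, -, hc⟩ := exists_hasDerivAt_eq_slope f (fun _ => 0) hlt hf hd
  rw [eq_comm, div_eq_zero_iff, sub_eq_zero, sub_eq_zero] at hc
  exact hc.resolve_right hlt.ne' |>.symm

theorem hasDerivAt_div_eq_zero {φ p : ℝ → ℝ} {p' x : ℝ} (hp : HasDerivAt p p' x)
    (hpx : p x ≠ 0) (hφ : HasDerivAt φ (p' / p x * φ x) x) :
    HasDerivAt (fun t => φ t / p t) 0 x := by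
  refine (hφ.div hp hpx).congr_deriv ?_
  field_simp
  ring

theorem apply_mul_projIcc_eq {φ p : ℝ → ℝ} (hab : a ≤ b) (hφ : Continuous φ)
    (hp : Continuous p) (hp0 : ∀ x, p x ≠ 0) (hflat : ∀ x ∉ Icc a b, HasDerivAt φ 0 x)
    (hratio : ∀ x ∈ Ioo a b, HasDerivAt (fun t => φ t / p t) 0 x) (r s : ℝ) :
    φ s * p (projIcc a b hab r) = φ r * p (projIcc a b hab s) := by
  have hscaled : ∀ y, φ y = φ a / p a * p (projIcc a b hab y) := by
    intro y
    rcases le_total y a with hya | hay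
    · rw [projIcc_of_le_left hab hya, div_mul_cancel₀ _ (hp0 a)]
      refine eq_of_hasDerivAt_zero_Ioo hya hφ.continuousOn fun x hx => hflat x ?_
      exact fun hxab => hx.2.not_ge hxab.1
    rcases le_total y b with hyb | hby
    · have hconst : φ a / p a = φ y / p y := eq_of_hasDerivAt_zero_Ioo hay
        (hφ.div hp hp0).continuousOn fun x hx => hratio x ⟨hx.1, hx.2.trans_le hyb⟩
      rw [projIcc_of_mem hab (mem_Icc.2 ⟨hay, hyb⟩), hconst, div_mul_cancel₀ _ (hp0 y)]
    · have hconst : φ a / p a = φ b / p b :=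
        eq_of_hasDerivAt_zero_Ioo hab (hφ.div hp hp0).continuousOn hratio
      rw [projIcc_of_right_le hab hby, hconst, div_mul_cancel₀ _ (hp0 b)]
      refine (eq_of_hasDerivAt_zero_Ioo hby hφ.continuousOn fun x hx => hflat x ?_).symm
      exact fun hxab => hx.1.not_ge hxab.2
  rw [hscaled r, hscaled s]
  ring

end ConstantPieces

def shearedSymbol (k ξ η t : ℝ) : ℝ := k ^ 2 + (ξ - k * t) ^ 2 + η ^ 2

section ShearedSymbol

variable {k ξ η : ℝ}

theorem shearedSymbol_pos (hk : k ≠ 0) (t : ℝ) : 0 < shearedSymbol k ξ η t := by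
  unfold shearedSymbol
  positivity

theorem continuous_shearedSymbol : Continuous (shearedSymbol k ξ η) := by
  unfold shearedSymbol
  fun_prop

theorem hasDerivAt_shearedSymbol (t : ℝ) :
    HasDerivAt (shearedSymbol k ξ η) (-2 * k * (ξ - k * t)) t := by
  have hlin : HasDerivAt (fun t => ξ - k * t) (-k) t := by
    simpa using ((hasDerivAt_id t).const_mul k).const_sub ξ
  refine ((hlin.pow 2).const_add (k ^ 2) |>.add_const (η ^ 2)).congr_deriv ?_
  ring

theorem shearedSymbol_le (s s₀ : ℝ) :
    shearedSymbol k ξ η s ≤ 2 * (1 + (s - s₀) ^ 2) * shearedSymbol k ξ η s₀ := by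
  unfold shearedSymbol
  nlinarith [sq_nonneg (ξ - k * s₀ + k * (s - s₀)), sq_nonneg (k * (s - s₀)),
    mul_nonneg (sq_nonneg (s - s₀)) (add_nonneg (sq_nonneg (ξ - k * s₀)) (sq_nonneg η))]

end ShearedSymbol

theorem multiplier_phi_growth_bound_general
    (k : ℤ) (hk : k ≠ 0) (ξ η ν β₀ : ℝ)
    (hν : 0 < ν) (hβ₀ : 2 < β₀)
    (φ : ℝ → ℝ) (hφc : Continuous φ) (hφ0 : φ 0 = 1)
    (hode : ∀ t ∈ Set.Ioo (ξ / (k : ℝ)) (ξ / (k : ℝ) + β₀ * ν ^ (-(1 : ℝ) / 3)),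
      HasDerivAt φ
        (((-2 * (k : ℝ) * (ξ - k * t)) / ((k : ℝ) ^ 2 + (ξ - k * t) ^ 2 + η ^ 2)) * φ t) t)
    (hflat : ∀ t ∉ Set.Icc (ξ / (k : ℝ)) (ξ / (k : ℝ) + β₀ * ν ^ (-(1 : ℝ) / 3)),
      HasDerivAt φ 0 t) :
    ∀ t ≥ (0 : ℝ), (Real.sqrt (1 + t ^ 2)) ^ (-(2 : ℝ)) * φ t ≤ 3 := by
  intro t _
  set p := shearedSymbol k ξ η
  have hp : ∀ s, 0 < p s := shearedSymbol_pos (Int.cast_ne_zero.mpr hk)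
  have hab : ξ / k ≤ ξ / k + β₀ * ν ^ (-(1 : ℝ) / 3) :=
    le_add_of_nonneg_right (mul_nonneg (by linarith) (Real.rpow_pos_of_pos hν _).le)
  set π := projIcc _ _ hab
  have hφt : φ t * p (π 0) = p (π t) := by
    rw [apply_mul_projIcc_eq hab hφc continuous_shearedSymbol (fun s => (hp s).ne') hflat
      (fun x hx => hasDerivAt_div_eq_zero (hasDerivAt_shearedSymbol x) (hp x).ne' (hode x hx)),
      hφ0, one_mul]
  have hcontract : ((π t : ℝ) - π 0) ^ 2 ≤ t ^ 2 := by
    simpa using sq_le_sq.mpr (abs_projIcc_sub_projIcc hab (c := t) (d := 0))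
  have hweight : Real.sqrt (1 + t ^ 2) ^ (-(2 : ℝ)) = (1 + t ^ 2)⁻¹ := by
    rw [Real.rpow_neg (Real.sqrt_nonneg _), Real.rpow_two, Real.sq_sqrt (by positivity)]
  rw [hweight, inv_mul_le_iff₀ (by positivity), ← mul_le_mul_iff_left₀ (hp (π 0)), hφt]
  calc p (π t) ≤ 2 * (1 + ((π t : ℝ) - π 0) ^ 2) * p (π 0) := shearedSymbol_le _ _
    _ ≤ (1 + t ^ 2) * 3 * p (π 0) := by nlinarith [hp (π 0)]

/-- For the Fourier multiplier `φ` of Lemma 2.1 (defined by `φ(0)=1`,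
`φ' = (∂ₜp/p)·φ` on `[ξ/k, ξ/k + β₀ ν^{−1/3}]` and `φ' = 0` otherwise, with
`p(t) = k² + (ξ−kt)² + η²`), one has `⟨t⟩^{−2} φ(t) ≤ 3` for all `t ≥ 0`,
where `⟨t⟩ = √(1+t²)`, i.e. `φ(t)/(1+t²) ≤ 3`. -/
theorem multiplier_phi_growth_bound
    (k : ℤ) (hk : k ≠ 0) (ξ η ν β₀ : ℝ)
    (hν : 0 < ν) (hν1 : ν ≤ 1) (hβ₀ : 2 < β₀)
    (φ : ℝ → ℝ) (hφc : Continuous φ) (hφ0 : φ 0 = 1)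
    (hode : ∀ t ∈ Set.Ioo (ξ / (k : ℝ)) (ξ / (k : ℝ) + β₀ * ν ^ (-(1 : ℝ) / 3)),
      HasDerivAt φ
        (((-2 * (k : ℝ) * (ξ - k * t)) / ((k : ℝ) ^ 2 + (ξ - k * t) ^ 2 + η ^ 2)) * φ t) t)
    (hflat : ∀ t ∉ Set.Icc (ξ / (k : ℝ)) (ξ / (k : ℝ) + β₀ * ν ^ (-(1 : ℝ) / 3)),
      HasDerivAt φ 0 t) :
    ∀ t ≥ (0 : ℝ), (Real.sqrt (1 + t ^ 2)) ^ (-(2 : ℝ)) * φ t ≤ 3 :=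
  multiplier_phi_growth_bound_general k hk ξ η ν β₀ hν hβ₀ φ hφc hφ0 hode hflat
end

section
/- Let B : ℝ → ℂ be bounded and C¹ with B' ∈ L¹(ℝ). Then there is C > 0 depending only on ‖B‖_{L∞} and ‖B'‖_{L¹} such that for all t ≥ 1, ρ ≥ 0, φ ∈ ℝ, |∫₀^{π} e^{i t sin θ} B(ρ cos(θ − φ)) dθ| ≤ C t^{−1/2}. -/
/-! Integrating by parts against the primitive `E(x) = ∫₀^x e^{it sin θ} dθ` separates amplitude and
phase: `|∫₀^π e^{it sin θ} f θ dθ| ≤ sup |E| · (|f 0| + |f π| + ∫₀^π |f'|)` with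
`f θ = B(ρ cos(θ - φ))`. The variation `∫₀^π |f'|` is at most `2‖B'‖₁` (substitute `v = ρ cos u` on
each half-period). As for `E`: on `[0, π/2 - δ]` we have `cos θ ≥ sin δ`, so a second integration by
parts, against `(it cos θ)⁻¹`, gives `|E| = O(1/(tδ))`; across the stationary point `π/2` the
integrand has modulus one, and `sin (π - θ) = sin θ` covers `[π/2, π]`. Taking `δ = t^{-1/2}`
gives `sup_{[0, π]} |E| = O(t^{-1/2})`. -/

open MeasureTheory Complex
open scoped Real
open Set intervalIntegral

theorem norm_integral_deriv_mul_le {A : Type*} [NormedRing A] [NormedAlgebra ℝ A] [CompleteSpace A]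
    {a b K : ℝ} {G g f f' : ℝ → A} (hab : a ≤ b)
    (hG : ∀ x ∈ uIcc a b, HasDerivAt G (g x) x) (hf : ∀ x ∈ uIcc a b, HasDerivAt f (f' x) x)
    (hg : IntervalIntegrable g volume a b) (hf' : IntervalIntegrable f' volume a b)
    (hK : ∀ x ∈ Icc a b, ‖G x‖ ≤ K) :
    ‖∫ x in a..b, g x * f x‖ ≤ K * (‖f a‖ + ‖f b‖ + ∫ x in a..b, ‖f' x‖) := by
  have hGc : ContinuousOn G (uIcc a b) := fun x hx => (hG x hx).continuousAt.continuousWithinAt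
  have hparts : ∫ x in a..b, g x * f x = G b * f b - G a * f a - ∫ x in a..b, G x * f' x := by
    rw [integral_mul_deriv_eq_deriv_mul hG hf hg hf']
    abel
  have hGf' : ∫ x in a..b, ‖G x * f' x‖ ≤ ∫ x in a..b, K * ‖f' x‖ := by
    refine integral_mono_on hab ?_ (hf'.norm.const_mul K) fun x hx => ?_
    · exact (hf'.continuousOn_mul hGc).norm
    · exact (norm_mul_le _ _).trans (mul_le_mul_of_nonneg_right (hK x hx) (norm_nonneg _))
  calc ‖∫ x in a..b, g x * f x‖
      ≤ ‖G b * f b‖ + ‖G a * f a‖ + ‖∫ x in a..b, G x * f' x‖ := by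
        rw [hparts]; exact (norm_sub_le _ _).trans (by gcongr; exact norm_sub_le _ _)
    _ ≤ K * ‖f b‖ + K * ‖f a‖ + ∫ x in a..b, K * ‖f' x‖ := by
        gcongr
        · exact (norm_mul_le _ _).trans (by gcongr; exact hK b (right_mem_Icc.2 hab))
        · exact (norm_mul_le _ _).trans (by gcongr; exact hK a (left_mem_Icc.2 hab))
        · exact (intervalIntegral.norm_integral_le_integral_norm hab).trans hGf'
    _ = K * (‖f a‖ + ‖f b‖ + ∫ x in a..b, ‖f' x‖) := by
        rw [intervalIntegral.integral_const_mul]; ring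

theorem integral_eq_two_smul_integral_sub_of_reflect {E : Type*} [NormedAddCommGroup E]
    [NormedSpace ℝ E] {h : ℝ → E} (hh : Continuous h) {c : ℝ} (hsymm : ∀ θ, h (2 * c - θ) = h θ)
    (x : ℝ) :
    ∫ θ in (0 : ℝ)..x, h θ =
      (2 : ℝ) • (∫ θ in (0 : ℝ)..c, h θ) - ∫ θ in (0 : ℝ)..(2 * c - x), h θ := by
  have hreflect : ∫ θ in c..x, h θ = ∫ θ in (2 * c - x)..c, h θ := by
    calc ∫ θ in c..x, h θ = ∫ θ in c..x, h (2 * c - θ) := by simp only [hsymm]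
      _ = ∫ θ in (2 * c - x)..c, h θ := by
        rw [intervalIntegral.integral_comp_sub_left h, show 2 * c - c = c by ring]
  rw [← integral_add_adjacent_intervals (hh.intervalIntegrable 0 c) (hh.intervalIntegrable c x),
    hreflect, ← integral_interval_sub_left (hh.intervalIntegrable 0 c)
      (hh.intervalIntegrable 0 (2 * c - x)), two_smul]
  abel

theorem Function.Periodic.intervalIntegral_le_of_le_add_period {h : ℝ → ℝ} {T : ℝ}
    (hper : Function.Periodic h T) (h₀ : ∀ x, 0 ≤ h x) {a b : ℝ}
    (hint : IntervalIntegrable h volume a (a + T)) (hab : a ≤ b) (hb : b ≤ a + T) (c : ℝ) :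
    ∫ x in a..b, h x ≤ ∫ x in c..(c + T), h x := by
  rw [← hper.intervalIntegral_add_eq a c]
  exact integral_mono_interval le_rfl hab hb (Filter.Eventually.of_forall h₀) hint

theorem norm_exp_I_mul_ofReal_mul_ofReal (x y : ℝ) : ‖cexp (I * x * y)‖ = 1 := by
  rw [mul_assoc, ← ofReal_mul, norm_exp_I_mul_ofReal]

theorem norm_integral_exp_mul_sin_le_of_lt_pi_div_two {t a : ℝ} (ht : 0 < t) (ha₀ : 0 ≤ a)
    (ha : a < π / 2) :
    ‖∫ θ in (0 : ℝ)..a, cexp (I * t * Real.sin θ)‖ ≤ 2 / (t * Real.cos a) := by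
  have hcos : ∀ θ ∈ uIcc 0 a, 0 < Real.cos θ := fun θ hθ => by
    rw [uIcc_of_le ha₀] at hθ
    exact Real.cos_pos_of_mem_Ioo ⟨by linarith [hθ.1, Real.pi_pos], hθ.2.trans_lt ha⟩
  have hsec : ∀ θ ∈ uIcc 0 a,
      HasDerivAt (fun θ => (Real.cos θ)⁻¹) (Real.sin θ / Real.cos θ ^ 2) θ := fun θ hθ => by
    have := (Real.hasDerivAt_cos θ).inv (hcos θ hθ).ne'
    rwa [neg_neg] at this
  have hsec_cont : ContinuousOn (fun θ => Real.sin θ / Real.cos θ ^ 2) (uIcc 0 a) :=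
    Real.continuousOn_sin.div (Real.continuousOn_cos.pow 2) fun θ hθ => (pow_pos (hcos θ hθ) 2).ne'
  -- `e^{it sin θ} = (e^{it sin θ})' · (it cos θ)⁻¹`,
  -- and `(it cos θ)⁻¹` has total variation `t⁻¹ (sec a - 1)` on `[0, a]`.
  have hparts := norm_integral_deriv_mul_le (K := 1) ha₀
    (G := fun θ => cexp (I * t * Real.sin θ))
    (g := fun θ => cexp (I * t * Real.sin θ) * (I * t * Real.cos θ))
    (f := fun θ => (I * t)⁻¹ * ((Real.cos θ)⁻¹ : ℝ))
    (f' := fun θ => (I * t)⁻¹ * (Real.sin θ / Real.cos θ ^ 2 : ℝ))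
    (fun θ _ => by simpa using (((Real.hasDerivAt_sin θ).ofReal_comp).const_mul (I * t)).cexp)
    (fun θ hθ => ((hsec θ hθ).ofReal_comp).const_mul _)
    ((by fun_prop : Continuous _).intervalIntegrable _ _)
    ((continuous_ofReal.comp_continuousOn hsec_cont).const_smul (I * t)⁻¹).intervalIntegrable
    (fun θ _ => (norm_exp_I_mul_ofReal_mul_ofReal t _).le)
  have hintegrand : ∫ θ in (0 : ℝ)..a, cexp (I * t * Real.sin θ) =
      ∫ θ in (0 : ℝ)..a, cexp (I * t * Real.sin θ) * (I * t * Real.cos θ) *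
        ((I * t)⁻¹ * ((Real.cos θ)⁻¹ : ℝ)) := by
    refine integral_congr fun θ hθ => ?_
    have : (Real.cos θ : ℂ) ≠ 0 := ofReal_ne_zero.2 (hcos θ hθ).ne'
    have : (t : ℂ) ≠ 0 := ofReal_ne_zero.2 ht.ne'
    rw [ofReal_inv]
    field_simp
  have hvariation : ∫ θ in (0 : ℝ)..a, ‖(I * (t : ℂ))⁻¹ * (Real.sin θ / Real.cos θ ^ 2 : ℝ)‖ =
      t⁻¹ * ((Real.cos a)⁻¹ - 1) := by
    have := integral_eq_sub_of_hasDerivAt hsec hsec_cont.intervalIntegrable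
    rw [Real.cos_zero, inv_one] at this
    rw [← this, ← intervalIntegral.integral_const_mul]
    refine integral_congr fun θ hθ => ?_
    have hsin : 0 ≤ Real.sin θ := by
      rw [uIcc_of_le ha₀] at hθ
      exact Real.sin_nonneg_of_nonneg_of_le_pi hθ.1 (by linarith [hθ.2, Real.pi_pos])
    rw [norm_mul, norm_inv, norm_mul, norm_I, one_mul, norm_real, norm_real,
      Real.norm_of_nonneg ht.le, Real.norm_of_nonneg (div_nonneg hsin (sq_nonneg _))]
  rw [hintegrand]
  refine hparts.trans (le_of_eq ?_)
  have hcos_a : 0 < Real.cos a := hcos a right_mem_uIcc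
  rw [hvariation, Real.cos_zero, inv_one, ofReal_one, mul_one]
  simp only [norm_mul, norm_inv, norm_I, norm_real, Real.norm_of_nonneg ht.le,
    Real.norm_of_nonneg hcos_a.le]
  field_simp
  ring

theorem norm_integral_exp_mul_sin_le_two_div_add {t δ x : ℝ} (ht : 0 < t) (hδ : 0 < δ)
    (hδπ : δ ≤ π / 2) (hx₀ : 0 ≤ x) (hx : x ≤ π / 2) :
    ‖∫ θ in (0 : ℝ)..x, cexp (I * t * Real.sin θ)‖ ≤ 2 / (t * Real.sin δ) + δ := by
  have hsinδ : 0 < Real.sin δ := Real.sin_pos_of_pos_of_lt_pi hδ (by linarith [Real.pi_pos])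
  have hfar : ∀ y, 0 ≤ y → y ≤ π / 2 - δ →
      ‖∫ θ in (0 : ℝ)..y, cexp (I * t * Real.sin θ)‖ ≤ 2 / (t * Real.sin δ) := fun y hy₀ hy => by
    refine (norm_integral_exp_mul_sin_le_of_lt_pi_div_two ht hy₀ (by linarith)).trans ?_
    have : Real.sin δ ≤ Real.cos y := by
      rw [← Real.cos_pi_div_two_sub]
      exact Real.cos_le_cos_of_nonneg_of_le_pi hy₀ (by linarith) hy
    gcongr
  rcases le_or_gt x (π / 2 - δ) with hxδ | hxδ
  · exact (hfar x hx₀ hxδ).trans (le_add_of_nonneg_right hδ.le)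
  have hcont : Continuous fun θ : ℝ => cexp (I * t * Real.sin θ) := by fun_prop
  rw [← integral_add_adjacent_intervals (hcont.intervalIntegrable 0 (π / 2 - δ))
    (hcont.intervalIntegrable _ x)]
  refine (norm_add_le _ _).trans (add_le_add (hfar _ (by linarith) le_rfl) ?_)
  refine (intervalIntegral.norm_integral_le_of_norm_le_const (C := 1)
    fun θ _ => (norm_exp_I_mul_ofReal_mul_ofReal t _).le).trans ?_
  rw [one_mul, abs_of_pos (by linarith)]
  linarith

theorem norm_integral_exp_mul_sin_le_rpow {t x : ℝ} (ht : 1 ≤ t) (hx₀ : 0 ≤ x) (hx : x ≤ π) :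
    ‖∫ θ in (0 : ℝ)..x, cexp (I * t * Real.sin θ)‖ ≤ 15 * t ^ (-(1 : ℝ) / 2) := by
  set δ := t ^ (-(1 : ℝ) / 2)
  have ht₀ : 0 < t := by linarith
  have hδ : 0 < δ := Real.rpow_pos_of_pos ht₀ _
  have hδ₁ : δ ≤ 1 := Real.rpow_le_one_of_one_le_of_nonpos ht (by norm_num)
  have htδ : t * δ * δ = 1 := by
    rw [mul_assoc, ← Real.rpow_add ht₀, show -(1 : ℝ) / 2 + -1 / 2 = -1 by norm_num,
      Real.rpow_neg_one, mul_inv_cancel₀ ht₀.ne']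
  have hbalance : 2 / (t * Real.sin δ) + δ ≤ 5 * δ := by
    have hsin : δ / 2 ≤ Real.sin δ := by
      have := Real.mul_le_sin hδ.le (by linarith [Real.pi_gt_three])
      have : 1 / 2 ≤ 2 / π := by
        rw [le_div_iff₀ Real.pi_pos]
        linarith [Real.pi_lt_four]
      nlinarith
    have : 2 / (t * Real.sin δ) ≤ 4 * δ := by
      rw [div_le_iff₀ (mul_pos ht₀ (by linarith))]
      nlinarith
    linarith
  have hhalf : ∀ y, 0 ≤ y → y ≤ π / 2 → ‖∫ θ in (0 : ℝ)..y, cexp (I * t * Real.sin θ)‖ ≤ 5 * δ :=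
    fun y hy₀ hy => (norm_integral_exp_mul_sin_le_two_div_add ht₀ hδ
      (by linarith [Real.pi_gt_three]) hy₀ hy).trans hbalance
  rcases le_or_gt x (π / 2) with hx' | hx'
  · linarith [hhalf x hx₀ hx']
  rw [integral_eq_two_smul_integral_sub_of_reflect (c := π / 2) (by fun_prop)
    (fun θ => by rw [mul_div_cancel₀ _ two_ne_zero, Real.sin_pi_sub]) x]
  refine (norm_sub_le _ _).trans ?_
  rw [norm_smul, Real.norm_two, mul_div_cancel₀ _ two_ne_zero]
  linarith [hhalf (π / 2) (by positivity) le_rfl, hhalf (π - x) (by linarith) (by linarith)]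

section Amplitude

variable {E : Type*} [NormedAddCommGroup E] [NormedSpace ℝ E]

theorem hasDerivAt_comp_mul_cos_sub {B : ℝ → E} (hB : Differentiable ℝ B) (ρ φ θ : ℝ) :
    HasDerivAt (fun θ => B (ρ * Real.cos (θ - φ)))
      ((-(ρ * Real.sin (θ - φ))) • deriv B (ρ * Real.cos (θ - φ))) θ := by
  have hinner : HasDerivAt (fun θ => ρ * Real.cos (θ - φ)) (-(ρ * Real.sin (θ - φ))) θ := by
    simpa using (((hasDerivAt_id θ).sub_const φ).cos).const_mul ρ
  exact (hB _).hasDerivAt.scomp θ hinner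

theorem integral_smul_sin_comp_mul_cos {g : ℝ → E} (hg : Continuous g) (ρ : ℝ) :
    ∫ u in (0 : ℝ)..π, (ρ * Real.sin u) • g (ρ * Real.cos u) = ∫ v in -ρ..ρ, g v := by
  have hsubst := integral_deriv_smul_comp (a := 0) (b := π) (g := g) (f := fun u => ρ * Real.cos u)
    (f' := fun u => -(ρ * Real.sin u))
    (fun u _ => by simpa using (Real.hasDerivAt_cos u).const_mul ρ) (by fun_prop) hg
  simp only [Function.comp_def, neg_smul, intervalIntegral.integral_neg, Real.cos_zero,
    Real.cos_pi, mul_one, mul_neg] at hsubst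
  rw [← neg_neg (∫ u in (0 : ℝ)..π, _), hsubst, integral_symm, neg_neg]

theorem integral_norm_smul_sin_sub_comp_mul_cos_sub_le {g : ℝ → E} (hg : Continuous g)
    (hg' : Integrable g) {ρ : ℝ} (hρ : 0 ≤ ρ) (φ : ℝ) :
    ∫ θ in (0 : ℝ)..π, ‖(-(ρ * Real.sin (θ - φ))) • g (ρ * Real.cos (θ - φ))‖ ≤
      2 * ∫ v, ‖g v‖ := by
  set H : ℝ → ℝ := fun u => ‖(-(ρ * Real.sin u)) • g (ρ * Real.cos u)‖ with hH
  have hHc : Continuous H := by fun_prop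
  have hHper : Function.Periodic H (2 * π) := fun u => by
    simp only [hH, Real.sin_add_two_pi, Real.cos_add_two_pi]
  have hHeven : ∀ u, H (-u) = H u := fun u => by
    simp only [hH, Real.sin_neg, Real.cos_neg, mul_neg, norm_smul, norm_neg]
  have hHhalf : ∫ u in (0 : ℝ)..π, H u = ∫ v in -ρ..ρ, ‖g v‖ := by
    rw [← integral_smul_sin_comp_mul_cos hg.norm ρ]
    refine integral_congr fun u hu => ?_
    rw [uIcc_of_le Real.pi_pos.le] at hu
    have hsin : 0 ≤ ρ * Real.sin u := mul_nonneg hρ (Real.sin_nonneg_of_nonneg_of_le_pi hu.1 hu.2)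
    simp only [hH, norm_smul, norm_neg, Real.norm_of_nonneg hsin, smul_eq_mul]
  have hHreflect : ∫ u in -π..0, H u = ∫ u in (0 : ℝ)..π, H u := by
    simpa only [neg_zero, hHeven] using
      (intervalIntegral.integral_comp_neg (a := 0) (b := π) H).symm
  calc ∫ θ in (0 : ℝ)..π, H (θ - φ)
      = ∫ u in -φ..(π - φ), H u := by rw [integral_comp_sub_right H φ, zero_sub]
    _ ≤ ∫ u in -π..(-π + 2 * π), H u :=
        hHper.intervalIntegral_le_of_le_add_period (fun u => norm_nonneg _)
          (hHc.intervalIntegrable _ _) (by linarith [Real.pi_pos]) (by linarith [Real.pi_pos]) _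
    _ = (∫ u in -π..0, H u) + ∫ u in (0 : ℝ)..π, H u := by
        rw [show -π + 2 * π = π by ring, integral_add_adjacent_intervals
          (hHc.intervalIntegrable (-π) 0) (hHc.intervalIntegrable 0 π)]
    _ = 2 * ∫ v in -ρ..ρ, ‖g v‖ := by
        rw [← hHhalf, two_mul, hHreflect]
    _ ≤ 2 * ∫ v, ‖g v‖ := by
        rw [intervalIntegral.integral_of_le (by linarith)]
        exact mul_le_mul_of_nonneg_left (setIntegral_le_integral hg'.norm
          (Filter.Eventually.of_forall fun v => norm_nonneg _)) two_pos.le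

end Amplitude

/-- Stationary-phase bound: for `B : ℝ → ℂ` bounded, `C¹`, with `B' ∈ L¹(ℝ)`,
there is `C > 0` (depending only on `‖B‖_{L∞}` and `‖B'‖_{L¹}`) such that for all
`t ≥ 1`, `ρ ≥ 0`, `φ ∈ ℝ`:
`|∫₀^π e^{i t sin θ} B(ρ cos(θ − φ)) dθ| ≤ C t^{−1/2}`. -/
theorem stationary_phase_bound (B : ℝ → ℂ)
    (hB : ContDiff ℝ 1 B) (hbdd : ∃ M : ℝ, ∀ x, ‖B x‖ ≤ M)
    (hB' : Integrable (deriv B)) :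
    ∃ C > (0 : ℝ), ∀ t ≥ (1 : ℝ), ∀ ρ ≥ (0 : ℝ), ∀ φ : ℝ,
      ‖∫ θ in (0 : ℝ)..Real.pi,
          Complex.exp (Complex.I * (t : ℂ) * (Real.sin θ : ℂ)) *
            B (ρ * Real.cos (θ - φ))‖ ≤ C * t ^ (-(1 : ℝ) / 2) := by
  obtain ⟨M, hM⟩ := hbdd
  have hM₀ : 0 ≤ M := (norm_nonneg _).trans (hM 0)
  set L := ∫ x, ‖deriv B x‖
  have hL₀ : 0 ≤ L := integral_nonneg fun x => norm_nonneg _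
  refine ⟨15 * (2 * M + 2 * L) + 1, by positivity, fun t ht ρ hρ φ => ?_⟩
  have hB'c : Continuous (deriv B) := hB.continuous_deriv le_rfl
  have hphase : Continuous fun θ : ℝ => cexp (I * t * Real.sin θ) := by fun_prop
  calc _ ≤ 15 * t ^ (-(1 : ℝ) / 2) * (‖B (ρ * Real.cos (0 - φ))‖ + ‖B (ρ * Real.cos (π - φ))‖ +
        ∫ θ in (0 : ℝ)..π, ‖(-(ρ * Real.sin (θ - φ))) • deriv B (ρ * Real.cos (θ - φ))‖) :=
        norm_integral_deriv_mul_le Real.pi_pos.le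
          (fun x _ => (hphase.integral_hasStrictDerivAt 0 x).hasDerivAt)
          (fun θ _ => hasDerivAt_comp_mul_cos_sub (hB.differentiable one_ne_zero) ρ φ θ)
          (hphase.intervalIntegrable _ _)
          ((by fun_prop : Continuous _).intervalIntegrable _ _)
          (fun x hx => norm_integral_exp_mul_sin_le_rpow ht hx.1 hx.2)
    _ ≤ 15 * t ^ (-(1 : ℝ) / 2) * (M + M + 2 * L) := by
        gcongr
        · exact hM _
        · exact hM _
        · exact integral_norm_smul_sin_sub_comp_mul_cos_sub_le hB'c hB' hρ φ
    _ ≤ (15 * (2 * M + 2 * L) + 1) * t ^ (-(1 : ℝ) / 2) := by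
        linarith [Real.rpow_nonneg (by linarith : (0 : ℝ) ≤ t) (-(1 : ℝ) / 2)]
end

section
/- Let B̃ : ℝ → ℂ be C¹ with B̃' ∈ L¹(ℝ). Then for all t ≠ 0, ρ ≥ 0, φ ∈ ℝ, |∫_{−π}^{π} e^{i t sin θ} cos θ · B̃(ρ cos(θ − φ)) dθ| ≤ (2/|t|) ∫_{−ρ}^{ρ} |B̃'(z)| dz ≤ (2/|t|) ‖B̃'‖_{L¹(ℝ)}. -/
/-!
Since `cos θ · e^{it sin θ} = (it)⁻¹ ∂_θ e^{it sin θ}`, integrating by parts over the full period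
(both factors are `2π`-periodic, so there are no boundary terms) moves the derivative onto
`v θ = B̃(ρ cos(θ - φ))` and gains the factor `|t|⁻¹`. The total variation of `v` over a period is
`∫ |ρ sin(θ - φ)| |B̃'(ρ cos(θ - φ))| dθ`; by periodicity and evenness this is twice the integral
over `[0, π]`, and the substitution `z = ρ cos θ` turns that into `∫_{-ρ}^{ρ} |B̃'|`.
-/

open MeasureTheory Complex
open scoped Real

theorem hasDerivAt_cexp_I_mul_sin (t θ : ℝ) :
    HasDerivAt (fun θ : ℝ => cexp (I * t * Real.sin θ))
      (cexp (I * t * Real.sin θ) * (I * t * Real.cos θ)) θ := by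
  simpa using ((Real.hasDerivAt_sin θ).ofReal_comp.const_mul (I * t)).cexp

theorem integral_cexp_I_mul_sin_mul_cos_mul_eq {t : ℝ} (ht : t ≠ 0) {v : ℝ → ℂ}
    (hv : ContDiff ℝ 1 v) (hper : v (-π) = v π) :
    ∫ θ in -π..π, cexp (I * t * Real.sin θ) * Real.cos θ * v θ
      = -(I * t)⁻¹ * ∫ θ in -π..π, cexp (I * t * Real.sin θ) * deriv v θ := by
  have hibp := intervalIntegral.integral_mul_deriv_eq_deriv_mul (a := -π) (b := π)
    (fun θ _ => hasDerivAt_cexp_I_mul_sin t θ)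
    (fun θ _ => (hv.differentiable one_ne_zero θ).hasDerivAt)
    ((by fun_prop : Continuous fun θ : ℝ =>
      cexp (I * t * Real.sin θ) * (I * t * Real.cos θ)).intervalIntegrable _ _)
    ((hv.continuous_deriv le_rfl).intervalIntegrable _ _)
  simp only [Real.sin_neg, Real.sin_pi, neg_zero, ofReal_zero, mul_zero, Complex.exp_zero,
    hper, sub_self, zero_sub] at hibp
  rw [hibp, neg_mul_neg, ← intervalIntegral.integral_const_mul]
  congr 1 with θ
  have : (t : ℂ) ≠ 0 := ofReal_ne_zero.mpr ht
  field_simp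

theorem norm_integral_cexp_I_mul_sin_mul_cos_mul_le {t : ℝ} (ht : t ≠ 0) {v : ℝ → ℂ}
    (hv : ContDiff ℝ 1 v) (hper : v (-π) = v π) :
    ‖∫ θ in -π..π, cexp (I * t * Real.sin θ) * Real.cos θ * v θ‖
      ≤ |t|⁻¹ * ∫ θ in -π..π, ‖deriv v θ‖ := by
  rw [integral_cexp_I_mul_sin_mul_cos_mul_eq ht hv hper, norm_mul, norm_neg, norm_inv,
    norm_mul, norm_I, one_mul, norm_real, Real.norm_eq_abs]
  gcongr
  refine (intervalIntegral.norm_integral_le_integral_norm (by linarith [Real.pi_pos])).trans_eq ?_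
  congr 1 with θ
  simp [norm_exp]

theorem intervalIntegral_neg_self_eq_two_nsmul_of_even {E : Type*} [NormedAddCommGroup E]
    [NormedSpace ℝ E] {f : ℝ → E} (hf : Function.Even f) {a : ℝ}
    (hfa : IntervalIntegrable f volume (-a) a) :
    ∫ x in -a..a, f x = 2 • ∫ x in 0..a, f x := by
  have h0 : (0 : ℝ) ∈ Set.uIcc (-a) a := by
    rcases le_total 0 a with h | h <;> simp [h]
  have hneg : ∫ x in -a..0, f x = ∫ x in 0..a, f x := by
    simpa [hf _] using (intervalIntegral.integral_comp_neg (a := 0) (b := a) f).symm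
  rw [← intervalIntegral.integral_add_adjacent_intervals
    (hfa.mono_set (Set.uIcc_subset_uIcc_left h0)) (hfa.mono_set (Set.uIcc_subset_uIcc_right h0)),
    hneg, two_nsmul]

theorem intervalIntegral_mul_sin_mul_comp_mul_cos {g : ℝ → ℝ} (hg : Continuous g) (ρ : ℝ) :
    ∫ θ in 0..π, ρ * Real.sin θ * g (ρ * Real.cos θ) = ∫ z in -ρ..ρ, g z := by
  have hcos : ∀ θ ∈ Set.uIcc 0 π,
      HasDerivAt (fun θ => ρ * Real.cos θ) (ρ * -Real.sin θ) θ :=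
    fun θ _ => (Real.hasDerivAt_cos θ).const_mul ρ
  have := intervalIntegral.integral_comp_mul_deriv hcos (by fun_prop) hg
  simp only [Function.comp, Real.cos_zero, Real.cos_pi, mul_one, mul_neg_one] at this
  rw [intervalIntegral.integral_symm ρ (-ρ), ← this, ← intervalIntegral.integral_neg]
  congr 1 with θ
  ring

theorem intervalIntegral_abs_mul_sin_mul_comp_mul_cos {g : ℝ → ℝ} (hg : Continuous g)
    {ρ : ℝ} (hρ : 0 ≤ ρ) (φ : ℝ) :
    ∫ θ in -π..π, |ρ * Real.sin (θ - φ)| * g (ρ * Real.cos (θ - φ))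
      = 2 * ∫ z in -ρ..ρ, g z := by
  set H : ℝ → ℝ := fun θ => |ρ * Real.sin θ| * g (ρ * Real.cos θ)
  have hH : Continuous H := by fun_prop
  have hper : Function.Periodic H (2 * π) := fun θ => by
    simp only [H, Real.sin_add_two_pi, Real.cos_add_two_pi]
  have heven : Function.Even H := fun θ => by
    simp only [H, Real.sin_neg, Real.cos_neg, mul_neg, abs_neg]
  have hshift : ∫ θ in -π..π, H (θ - φ) = ∫ θ in -π..π, H θ := by
    rw [intervalIntegral.integral_comp_sub_right]
    convert hper.intervalIntegral_add_eq (-π - φ) (-π) using 2 <;> ring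
  have hhalf : ∫ θ in 0..π, H θ = ∫ θ in 0..π, ρ * Real.sin θ * g (ρ * Real.cos θ) :=
    intervalIntegral.integral_congr fun θ hθ => by
      rw [Set.uIcc_of_le Real.pi_pos.le] at hθ
      simp only [H, abs_of_nonneg (mul_nonneg hρ (Real.sin_nonneg_of_nonneg_of_le_pi hθ.1 hθ.2))]
  rw [hshift, intervalIntegral_neg_self_eq_two_nsmul_of_even heven (hH.intervalIntegrable _ _),
    hhalf, nsmul_eq_mul, Nat.cast_ofNat, intervalIntegral_mul_sin_mul_comp_mul_cos hg]

/-- Oscillatory-integral estimate: for `B̃ : ℝ → ℂ` of class `C¹` with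
`B̃' ∈ L¹(ℝ)`, all `t ≠ 0`, `ρ ≥ 0`, `φ ∈ ℝ`:
`|∫_{−π}^{π} e^{i t sin θ} cos θ · B̃(ρ cos(θ − φ)) dθ|
  ≤ (2/|t|) ∫_{−ρ}^{ρ} |B̃'(z)| dz ≤ (2/|t|) ‖B̃'‖_{L¹(ℝ)}`. -/
theorem oscillatory_integral_improved (B : ℝ → ℂ)
    (hB : ContDiff ℝ 1 B) (hB' : Integrable (deriv B)) :
    ∀ t : ℝ, t ≠ 0 → ∀ ρ ≥ (0 : ℝ), ∀ φ : ℝ,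
      ‖∫ θ in (-Real.pi)..Real.pi,
          Complex.exp (Complex.I * (t : ℂ) * (Real.sin θ : ℂ)) * (Real.cos θ : ℂ) *
            B (ρ * Real.cos (θ - φ))‖ ≤ (2 / |t|) * ∫ z in (-ρ)..ρ, ‖deriv B z‖ ∧
        (2 / |t|) * (∫ z in (-ρ)..ρ, ‖deriv B z‖) ≤ (2 / |t|) * ∫ z : ℝ, ‖deriv B z‖ := by
  intro t ht ρ hρ φ
  set v : ℝ → ℂ := fun θ => B (ρ * Real.cos (θ - φ))
  have hv : ContDiff ℝ 1 v := hB.comp (by fun_prop)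
  have hper : v (-π) = v π := by
    simp only [v, show -π - φ = π - φ - 2 * π by ring, Real.cos_sub_two_pi]
  have hv' : ∀ θ,
      ‖deriv v θ‖ = |ρ * Real.sin (θ - φ)| * ‖deriv B (ρ * Real.cos (θ - φ))‖ := by
    intro θ
    have hc : HasDerivAt (fun θ => ρ * Real.cos (θ - φ)) (ρ * -Real.sin (θ - φ)) θ := by
      simpa using
        ((Real.hasDerivAt_cos (θ - φ)).comp θ ((hasDerivAt_id θ).sub_const φ)).const_mul ρ
    have hd : HasDerivAt v ((ρ * -Real.sin (θ - φ)) • deriv B (ρ * Real.cos (θ - φ))) θ :=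
      (hB.differentiable one_ne_zero _).hasDerivAt.scomp θ hc
    rw [hd.deriv, norm_smul, Real.norm_eq_abs, mul_neg, abs_neg]
  constructor
  · calc _ ≤ |t|⁻¹ * ∫ θ in -π..π, ‖deriv v θ‖ :=
          norm_integral_cexp_I_mul_sin_mul_cos_mul_le ht hv hper
      _ = 2 / |t| * ∫ z in -ρ..ρ, ‖deriv B z‖ := by
        simp only [hv', intervalIntegral_abs_mul_sin_mul_comp_mul_cos
          (hB.continuous_deriv le_rfl).norm hρ]
        ring
  · gcongr
    rw [intervalIntegral.integral_of_le (by linarith)]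
    exact setIntegral_le_integral hB'.norm (.of_forall fun _ => norm_nonneg _)
end
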